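/- arXiv:2512.06980 — 2 statements merged into one kernel-verified Lean document; each statement's English description precedes it below -/
import Mathlib

section
/- For n ≥ 1, the number of proper partitions of the complete tripartite graph K_{n,n,n} into exactly 5 independent sets equals 3·S(n,2)^2 + 3·S(n,3), which equals (1/4)·(18 − 18·2^n + 2·3^n + 3·4^n). -/
/-- Stirling numbers of the second kind. -/
def stirling : ℕ → ℕ → ℕ
  | 0, 0 => 1
  | 0, _ + 1 => 0
  | _ + 1, 0 => 0
  | n + 1, k + 1 => (k + 1) * stirling n (k + 1) + stirling n k

/-!
A partition of `K_{n,n,n}` into independent sets is the same as a triple of set partitions of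
the three blocks, so the number with `5` parts is `∑_{a+b+c=5} S(n,a) S(n,b) S(n,c)`. For
`n ≥ 1` we have `S(n,0) = 0` and `S(n,1) = 1`, so only the orderings of `1+1+3` and `1+2+2`
contribute.

Partitions of an `n`-set into `k` parts are counted by `S(n,k)` because they satisfy the Stirling
recurrence: a new point goes either into a new singleton part or into one of the `k` old parts.
The closed form follows from `S(n+1,2) = 2^n - 1` and `2 S(n+1,3) = 3^n + 1 - 2^(n+1)`.
-/

open Finset

theorem stirling_eq_stirlingSecond : ∀ n k, stirling n k = Nat.stirlingSecond n k
  | 0, 0 | 0, _ + 1 | _ + 1, 0 => rfl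
  | n + 1, k + 1 => by
    rw [stirling, Nat.stirlingSecond_succ_succ, stirling_eq_stirlingSecond n (k + 1),
      stirling_eq_stirlingSecond n k]

namespace Nat

theorem stirlingSecond_succ_two (n : ℕ) : stirlingSecond (n + 1) 2 + 1 = 2 ^ n := by
  induction n with
  | zero => rfl
  | succ n ih =>
    have h : stirlingSecond (n + 1 + 1) 2 = 2 * stirlingSecond (n + 1) 2 + 1 := by
      rw [stirlingSecond_succ_left _ _ two_ne_zero, stirlingSecond_one_right]
    omega

theorem stirlingSecond_succ_three (n : ℕ) :
    2 * stirlingSecond (n + 1) 3 + 2 ^ (n + 1) = 3 ^ n + 1 := by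
  induction n with
  | zero => rfl
  | succ n ih =>
    have h2 := stirlingSecond_succ_two n
    have h3 : stirlingSecond (n + 1 + 1) 3 =
        3 * stirlingSecond (n + 1) 3 + stirlingSecond (n + 1) 2 := rfl
    rw [pow_succ] at ih ⊢
    rw [pow_succ 3]
    omega

end Nat

theorem stirling_two_three_closed_form (n : ℕ) (hn : 1 ≤ n) :
    3 * (stirling n 2 : ℚ) ^ 2 + 3 * stirling n 3 =
      (1 / 4) * (18 - 18 * 2 ^ n + 2 * 3 ^ n + 3 * 4 ^ n) := by
  obtain ⟨m, rfl⟩ := Nat.exists_eq_add_of_le' hn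
  have h2 : (stirling (m + 1) 2 : ℚ) + 1 = 2 ^ m := by
    exact_mod_cast stirling_eq_stirlingSecond _ _ ▸ Nat.stirlingSecond_succ_two m
  have h3 : 2 * (stirling (m + 1) 3 : ℚ) + 2 ^ (m + 1) = 3 ^ m + 1 := by
    exact_mod_cast stirling_eq_stirlingSecond _ _ ▸ Nat.stirlingSecond_succ_three m
  have h4 : (4 : ℚ) ^ m = (2 ^ m) ^ 2 := by rw [← pow_mul, mul_comm, pow_mul]; norm_num
  linear_combination (3 * ((stirling (m + 1) 2 : ℚ) + 2 ^ m - 1)) * h2 + (3 / 2) * h3 - 3 * h4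

theorem card_pi_sum_eq_sum_piAntidiag {ι : Type*} [Fintype ι] [DecidableEq ι] {X : ι → Type*}
    [∀ i, Fintype (X i)] (w : ∀ i, X i → ℕ) (m : ℕ) :
    Nat.card {g : ∀ i, X i // ∑ i, w i (g i) = m} =
      ∑ c ∈ univ.piAntidiag m, ∏ i, #{x | w i x = c i} := by
  classical
  rw [Nat.card_eq_fintype_card, Fintype.card_subtype,
    card_eq_sum_card_fiberwise (f := fun g i => w i (g i)) (t := univ.piAntidiag m)
      fun g hg => by simpa using hg]
  refine sum_congr rfl fun c hc => ?_
  rw [← Fintype.card_piFinset]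
  congr 1
  ext g
  simp only [mem_filter, mem_univ, true_and, Fintype.mem_piFinset, funext_iff]
  rw [mem_piAntidiag] at hc
  exact ⟨And.right, fun h => ⟨by simpa [h] using hc.1, h⟩⟩

namespace Finpartition

section InsertPoint

variable {α : Type*} [DecidableEq α] {s : Finset α} {a : α}

lemma subset_of_mem_insert_empty_parts (Q : Finpartition s) {t : Finset α}
    (ht : t ∈ insert ∅ Q.parts) : t ⊆ s := by
  rcases mem_insert.1 ht with rfl | ht
  exacts [empty_subset s, Q.le ht]

lemma notMem_of_mem_insert_empty_parts (Q : Finpartition s) (ha : a ∉ s) {t : Finset α}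
    (ht : t ∈ insert ∅ Q.parts) : a ∉ t :=
  fun h => ha (Q.subset_of_mem_insert_empty_parts ht h)

lemma avoid_parts_of_mem_insert_empty (Q : Finpartition s) {t : Finset α}
    (ht : t ∈ insert ∅ Q.parts) : (Q.avoid t).parts = Q.parts.erase t := by
  ext c
  rw [mem_avoid, mem_erase]
  rcases mem_insert.1 ht with rfl | ht
  · simp only [subset_empty, sdiff_empty, exists_eq_right_right]
    exact and_comm
  · constructor
    · rintro ⟨d, hd, hdt, rfl⟩
      have hne : d ≠ t := by rintro rfl; exact hdt le_rfl
      have hdisj : Disjoint d t := Q.disjoint hd ht hne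
      rw [hdisj.sdiff_eq_left]
      exact ⟨hne, hd⟩
    · rintro ⟨hne, hc⟩
      have hdisj : Disjoint c t := Q.disjoint hc ht hne
      exact ⟨c, hc, fun hct => Q.ne_bot hc (hdisj.eq_bot_of_le hct), hdisj.sdiff_eq_left⟩

/-- Adds `a` to the part `t` of `Q`; for `t = ∅` the singleton `{a}` becomes a new part. -/
def insertIntoPart (Q : Finpartition s) (ha : a ∉ s) (t : Finset α)
    (ht : t ∈ insert ∅ Q.parts) : Finpartition (insert a s) :=
  (Q.avoid t).extend (b := insert a t) (insert_ne_empty a t)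
    (disjoint_insert_right.2 ⟨fun h => ha (mem_sdiff.1 h).1, sdiff_disjoint⟩)
    (by rw [sup_eq_union, union_insert,
      sdiff_union_of_subset (Q.subset_of_mem_insert_empty_parts ht)])

lemma parts_insertIntoPart (Q : Finpartition s) (ha : a ∉ s) {t : Finset α}
    (ht : t ∈ insert ∅ Q.parts) :
    (Q.insertIntoPart ha t ht).parts = insert (insert a t) (Q.parts.erase t) := by
  rw [insertIntoPart, extend_parts, Q.avoid_parts_of_mem_insert_empty ht]

lemma part_insertIntoPart (Q : Finpartition s) (ha : a ∉ s) {t : Finset α}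
    (ht : t ∈ insert ∅ Q.parts) : (Q.insertIntoPart ha t ht).part a = insert a t :=
  part_eq_of_mem _ (by rw [parts_insertIntoPart]; exact mem_insert_self _ _) (mem_insert_self a t)

lemma card_parts_insertIntoPart (Q : Finpartition s) (ha : a ∉ s) {t : Finset α}
    (ht : t ∈ insert ∅ Q.parts) :
    #(Q.insertIntoPart ha t ht).parts = #Q.parts + if t = ∅ then 1 else 0 := by
  have hnew : insert a t ∉ Q.parts.erase t := fun h =>
    ha (Q.le (mem_of_mem_erase h) (mem_insert_self a t))
  rw [parts_insertIntoPart, card_insert_of_notMem hnew]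
  split_ifs with h
  · rw [h, erase_eq_of_notMem Q.empty_notMem_parts]
  · have ht' := (mem_insert.1 ht).resolve_left h
    rw [card_erase_of_mem ht']
    have := card_pos.2 ⟨t, ht'⟩
    omega

def removePoint (P : Finpartition (insert a s)) (ha : a ∉ s) : Finpartition s :=
  (P.avoid {a}).copy (by rw [sdiff_singleton_eq_erase, erase_insert ha])

lemma parts_removePoint (P : Finpartition (insert a s)) (ha : a ∉ s) :
    (P.removePoint ha).parts = (P.parts.image (·.erase a)).erase ∅ := by
  simp only [removePoint, copy, avoid, ofErase, sdiff_singleton_eq_erase, bot_eq_empty]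

lemma erase_part_mem_insert_empty_removePoint (P : Finpartition (insert a s)) (ha : a ∉ s) :
    (P.part a).erase a ∈ insert ∅ (P.removePoint ha).parts := by
  rw [parts_removePoint, mem_insert, mem_erase, mem_image]
  by_cases h : (P.part a).erase a = ∅
  · exact .inl h
  · exact .inr ⟨h, P.part a, P.part_mem.2 (mem_insert_self a s), rfl⟩

lemma removePoint_insertIntoPart (Q : Finpartition s) (ha : a ∉ s) {t : Finset α}
    (ht : t ∈ insert ∅ Q.parts) : (Q.insertIntoPart ha t ht).removePoint ha = Q := by
  have hQ {c : Finset α} (hc : c ∈ Q.parts) : c.erase a = c :=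
    erase_eq_of_notMem fun h => ha (Q.le hc h)
  ext c
  simp only [parts_removePoint, parts_insertIntoPart, mem_erase, mem_image, mem_insert,
    exists_eq_or_imp, erase_insert (Q.notMem_of_mem_insert_empty_parts ha ht)]
  constructor
  · rintro ⟨hc, rfl | ⟨d, ⟨-, hd⟩, rfl⟩⟩
    · exact (mem_insert.1 ht).resolve_left hc
    · rwa [hQ hd]
  · intro hc
    refine ⟨Q.ne_empty hc, ?_⟩
    by_cases hct : c = t
    · exact .inl hct.symm
    · exact .inr ⟨c, ⟨hct, hc⟩, hQ hc⟩

lemma insertIntoPart_removePoint (P : Finpartition (insert a s)) (ha : a ∉ s) :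
    (P.removePoint ha).insertIntoPart ha _ (P.erase_part_mem_insert_empty_removePoint ha) =
      P := by
  have hpa : P.part a ∈ P.parts := P.part_mem.2 (mem_insert_self a s)
  have haa : a ∈ P.part a := P.mem_part_self.2 (mem_insert_self a s)
  ext c
  rw [parts_insertIntoPart, insert_erase haa, parts_removePoint]
  simp only [mem_insert, mem_erase, mem_image]
  constructor
  · rintro (rfl | ⟨hne, -, d, hd, rfl⟩)
    · exact hpa
    · have had : a ∉ d := fun h => hne (by rw [P.part_eq_of_mem hd h])
      rwa [erase_eq_of_notMem had]
  · intro hc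
    by_cases hca : c = P.part a
    · exact .inl hca
    · have hac : a ∉ c := fun h => hca (P.part_eq_of_mem hc h).symm
      refine .inr ⟨fun h => hca ?_, P.ne_empty hc, c, hc, erase_eq_of_notMem hac⟩
      obtain ⟨x, hx⟩ := P.nonempty_of_mem_parts hc
      exact P.eq_of_mem_parts hc hpa hx (mem_of_mem_erase (h ▸ hx))

def insertEquiv (ha : a ∉ s) :
    Finpartition (insert a s) ≃
      Σ Q : Finpartition s, (insert ∅ Q.parts : Finset (Finset α)) where
  toFun P := ⟨P.removePoint ha, _, P.erase_part_mem_insert_empty_removePoint ha⟩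
  invFun x := x.1.insertIntoPart ha x.2 x.2.2
  left_inv P := P.insertIntoPart_removePoint ha
  right_inv := fun ⟨Q, _, ht⟩ => Sigma.subtype_ext (Q.removePoint_insertIntoPart ha ht) <| by
    simp only [part_insertIntoPart, erase_insert (Q.notMem_of_mem_insert_empty_parts ha ht)]

theorem card_filter_card_parts_insert (ha : a ∉ s) (k : ℕ) :
    #{P : Finpartition (insert a s) | #P.parts = k + 1} =
      #{Q : Finpartition s | #Q.parts = k} + (k + 1) * #{Q : Finpartition s | #Q.parts = k + 1} :=
  calc #{P : Finpartition (insert a s) | #P.parts = k + 1}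
      = ∑ x : Σ Q : Finpartition s, (insert ∅ Q.parts : Finset (Finset α)),
          if #(x.1.insertIntoPart ha x.2 x.2.2).parts = k + 1 then 1 else 0 := by
        rw [card_filter]
        exact ((insertEquiv ha).symm.sum_comp fun P => if #P.parts = k + 1 then 1 else 0).symm
    _ = ∑ Q : Finpartition s, ∑ t ∈ insert ∅ Q.parts,
          if #Q.parts + (if t = ∅ then 1 else 0) = k + 1 then 1 else 0 := by
        rw [Fintype.sum_sigma]
        refine sum_congr rfl fun Q _ => ?_
        simp only [card_parts_insertIntoPart]
        exact sum_coe_sort _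
          fun t => if #Q.parts + (if t = ∅ then 1 else 0) = k + 1 then 1 else 0
    _ = ∑ Q : Finpartition s, ((if #Q.parts = k then 1 else 0) +
          (k + 1) * if #Q.parts = k + 1 then 1 else 0) := by
        refine sum_congr rfl fun Q _ => ?_
        rw [sum_insert Q.empty_notMem_parts, if_pos rfl,
          sum_congr rfl fun t ht => by rw [if_neg (Q.ne_empty ht), add_zero], sum_const,
          smul_eq_mul]
        split_ifs <;> omega
    _ = _ := by
        rw [sum_add_distrib, ← mul_sum, ← card_filter, ← card_filter]

theorem card_filter_card_parts_eq_stirlingSecond (s : Finset α) (k : ℕ) :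
    #{P : Finpartition s | #P.parts = k} = Nat.stirlingSecond #s k := by
  induction s using Finset.induction_on generalizing k with
  | empty =>
    have hP (P : Finpartition (∅ : Finset α)) : #P.parts = 0 := by
      rw [P.parts_eq_empty_iff.2 rfl, card_empty]
    cases k
    · simpa [hP] using Fintype.card_eq_one_iff.2
        ⟨(default : Finpartition (⊥ : Finset α)), fun P => Subsingleton.elim _ _⟩
    · simp [hP]
  | insert a s ha ih =>
    cases k with
    | zero =>
      have hP (P : Finpartition (insert a s)) : #P.parts ≠ 0 :=
        (card_pos.2 (P.parts_nonempty (insert_nonempty a s).ne_empty)).ne'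
      simp [hP, card_insert_of_notMem ha]
    | succ k =>
      rw [card_filter_card_parts_insert ha, ih, ih, card_insert_of_notMem ha,
        Nat.stirlingSecond_succ_succ, add_comm]

end InsertPoint

section Fibers

variable {α ι : Type*} [DecidableEq α] [DecidableEq ι] (f : α → ι) {s : Finset α}

def PartsInFibers (P : Finpartition s) : Prop :=
  ∀ p ∈ P.parts, ∀ x ∈ p, ∀ y ∈ p, f x = f y

lemma inter_fiber_of_subset_fiber {r : Finset α} {i j : ι} (hr : r ⊆ {x ∈ s | f x = j}) :
    r ∩ {x ∈ s | f x = i} = if j = i then r else ∅ := by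
  split_ifs with hji
  · exact inter_eq_left.2 (hji ▸ hr)
  · ext x
    simp only [mem_inter, mem_filter, notMem_empty, iff_false, not_and]
    exact fun hx _ hxi => hji ((mem_filter.1 (hr hx)).2.symm.trans hxi)

lemma PartsInFibers.subset_fiber {P : Finpartition s} (hP : P.PartsInFibers f) {q : Finset α}
    (hq : q ∈ P.parts) {x : α} (hx : x ∈ q) : q ⊆ {y ∈ s | f y = f x} :=
  fun y hy => mem_filter.2 ⟨P.le hq hy, hP q hq y hy x hx⟩

variable [Fintype ι]

variable (s) in
lemma supIndep_fibers : (univ : Finset ι).SupIndep fun i => {x ∈ s | f x = i} := by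
  rw [supIndep_iff_pairwiseDisjoint]
  intro i _ j _ hij
  exact disjoint_filter.2 fun x _ hi hj => hij (hi.symm.trans hj)

variable (s) in
lemma sup_fibers : (univ : Finset ι).sup (fun i => {x ∈ s | f x = i}) = s := by
  ext x
  simp [mem_sup]

lemma parts_combine_restrict_fibers {P : Finpartition s} (hP : P.PartsInFibers f) :
    (combine (fun i => P.restrict (filter_subset (f · = i) s)) (supIndep_fibers f s)).parts =
      P.parts := by
  ext p
  simp only [combine, restrict, mem_biUnion, mem_univ, true_and, mem_erase, mem_image,
    inf_eq_inter, bot_eq_empty]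
  constructor
  · rintro ⟨i, hp, q, hq, rfl⟩
    obtain ⟨x, hx⟩ := P.nonempty_of_mem_parts hq
    rw [inter_fiber_of_subset_fiber f (hP.subset_fiber f hq hx)] at hp ⊢
    split_ifs at hp ⊢
    exacts [hq, absurd rfl hp]
  · intro hp
    obtain ⟨x, hx⟩ := P.nonempty_of_mem_parts hp
    refine ⟨f x, P.ne_empty hp, p, hp, ?_⟩
    rw [inter_fiber_of_subset_fiber f (hP.subset_fiber f hp hx), if_pos rfl]

lemma restrict_combine_fibers (g : ∀ i, Finpartition {x ∈ s | f x = i}) (i : ι) :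
    ((combine g (supIndep_fibers f s)).copy (sup_fibers f s)).restrict (filter_subset _ s) =
      g i := by
  ext q
  simp only [copy, combine, restrict, mem_biUnion, mem_univ, true_and, mem_erase, mem_image,
    inf_eq_inter, bot_eq_empty]
  constructor
  · rintro ⟨hq, r, ⟨j, hr⟩, rfl⟩
    rw [inter_fiber_of_subset_fiber f ((g j).le hr)] at hq ⊢
    split_ifs at hq ⊢ with hji
    exacts [hji ▸ hr, absurd rfl hq]
  · intro hq
    exact ⟨(g i).ne_empty hq, q, ⟨i, hq⟩, inter_eq_left.2 ((g i).le hq)⟩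

def fiberwiseEquiv (s : Finset α) :
    {P : Finpartition s // P.PartsInFibers f} ≃ ∀ i, Finpartition {x ∈ s | f x = i} where
  toFun P i := P.1.restrict (filter_subset _ s)
  invFun g := ⟨(combine g (supIndep_fibers f s)).copy (sup_fibers f s), by
    intro p hp x hx y hy
    obtain ⟨i, -, hpi⟩ := mem_biUnion.1 hp
    rw [(mem_filter.1 ((g i).le hpi hx)).2, (mem_filter.1 ((g i).le hpi hy)).2]⟩
  left_inv P := Subtype.ext <| Finpartition.ext (parts_combine_restrict_fibers f P.2)
  right_inv g := funext (restrict_combine_fibers f g)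

lemma card_parts_fiberwiseEquiv_symm (g : ∀ i, Finpartition {x ∈ s | f x = i}) :
    #((fiberwiseEquiv f s).symm g).1.parts = ∑ i, #(g i).parts := by
  simp only [card_eq_sum_ones]
  exact sum_combine g (supIndep_fibers f s) fun _ => 1

theorem card_partsInFibers_card_parts_eq (s : Finset α) (m : ℕ) :
    Nat.card {P : Finpartition s // P.PartsInFibers f ∧ #P.parts = m} =
      ∑ c ∈ univ.piAntidiag m, ∏ i, Nat.stirlingSecond #{x ∈ s | f x = i} (c i) := by
  have e : {g : ∀ i, Finpartition {x ∈ s | f x = i} // ∑ i, #(g i).parts = m} ≃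
      {P : Finpartition s // P.PartsInFibers f ∧ #P.parts = m} :=
    (Equiv.subtypeEquiv (fiberwiseEquiv f s).symm fun g => by
      rw [card_parts_fiberwiseEquiv_symm]).trans (Equiv.subtypeSubtypeEquivSubtypeInter _ _)
  rw [← Nat.card_congr e, card_pi_sum_eq_sum_piAntidiag fun i (Q : Finpartition _) => #Q.parts]
  simp only [card_filter_card_parts_eq_stirlingSecond]

end Fibers

end Finpartition

theorem sum_antidiagonalTuple_three_five (f : ℕ → ℕ) (h0 : f 0 = 0) (h1 : f 1 = 1) :
    ∑ c ∈ Nat.antidiagonalTuple 3 5, ∏ i, f (c i) = 3 * f 2 ^ 2 + 3 * f 3 := by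
  simp [Nat.antidiagonalTuple, Multiset.Nat.antidiagonalTuple, List.Nat.antidiagonalTuple,
    Finset.sum, Fin.prod_univ_three, h0, h1, List.Nat.antidiagonal, List.range_succ]
  ring

/-- For `n ≥ 1`, the number of proper partitions of the complete tripartite graph
`K_{n,n,n}` into exactly `5` independent sets equals `3·S(n,2)² + 3·S(n,3)`, which equals
`(1/4)·(18 − 18·2^n + 2·3^n + 3·4^n)`. -/
theorem partitions_completeTripartite_five (n : ℕ) (hn : 1 ≤ n) :
    Nat.card {P : Finpartition (Finset.univ : Finset (Σ _i : Fin 3, Fin n)) //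
        (∀ p ∈ P.parts, ∀ a ∈ p, ∀ b ∈ p,
          ¬ (SimpleGraph.completeMultipartiteGraph (fun _i : Fin 3 => Fin n)).Adj a b) ∧
        P.parts.card = 5} =
      3 * stirling n 2 ^ 2 + 3 * stirling n 3 ∧
    (3 * (stirling n 2 : ℚ) ^ 2 + 3 * stirling n 3) =
      (1 / 4) * (18 - 18 * 2 ^ n + 2 * 3 ^ n + 3 * 4 ^ n) := by
  refine ⟨?_, stirling_two_three_closed_form n hn⟩
  obtain ⟨m, rfl⟩ := Nat.exists_eq_add_of_le' hn
  have hblock (i : Fin 3) :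
      #{x ∈ (univ : Finset (Σ _ : Fin 3, Fin (m + 1))) | x.1 = i} = m + 1 := by
    rw [← Fintype.card_subtype, Fintype.card_congr (Equiv.sigmaSubtype i), Fintype.card_fin]
  have hindep (P : Finpartition (univ : Finset (Σ _ : Fin 3, Fin (m + 1)))) :
      (∀ p ∈ P.parts, ∀ a ∈ p, ∀ b ∈ p,
        ¬ (SimpleGraph.completeMultipartiteGraph fun _i : Fin 3 => Fin (m + 1)).Adj a b) ↔
      P.PartsInFibers Sigma.fst := by
    simp [Finpartition.PartsInFibers]
  rw [Nat.card_congr (Equiv.subtypeEquivRight fun P => and_congr_left' (hindep P)),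
    Finpartition.card_partsInFibers_card_parts_eq, piAntidiag_univ_fin_eq_antidiagonalTuple]
  simp only [hblock, stirling_eq_stirlingSecond]
  exact sum_antidiagonalTuple_three_five _ rfl (Nat.stirlingSecond_one_right m)
end

section
/- Let H = K_{n,n} − M be the complete bipartite graph with a perfect matching removed. The total number of proper partitions of the vertex set of H into independent sets equals the sum over k = 0 to n of C(n,k)·B(k)^2, where B(k) is the k-th Bell number (with B(0) = 1). -/
/-- The classical Bell numbers. -/
def bell (n : ℕ) : ℕ := ∑ k ∈ Finset.range (n + 1), stirling n k

/-- The complete bipartite graph `K_{n,n}` with a perfect matching removed. -/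
def bipartiteMinusMatching (n : ℕ) : SimpleGraph (Fin n ⊕ Fin n) :=
  SimpleGraph.fromRel (fun x y =>
    match x, y with
    | Sum.inl i, Sum.inr j => i ≠ j
    | _, _ => False)

open Finset

lemma stirling_eq_zero_of_lt : ∀ {n k : ℕ}, n < k → stirling n k = 0
  | 0, _ + 1, _ => rfl
  | n + 1, k + 1, h => by
    rw [stirling, stirling_eq_zero_of_lt (by omega), stirling_eq_zero_of_lt (by omega), mul_zero]

lemma sum_range_stirling {n m : ℕ} (h : n ≤ m) :
    ∑ k ∈ range (m + 1), stirling n k = bell n :=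
  (sum_subset (range_subset_range.2 (by omega)) fun _ _ hk =>
    stirling_eq_zero_of_lt (by simpa using hk)).symm

lemma stirling_succ_succ_eq_sum (n k : ℕ) :
    stirling (n + 1) (k + 1) = ∑ j ∈ range (n + 1), n.choose j * stirling j k := by
  induction n generalizing k with
  | zero => cases k <;> rfl
  | succ n ih =>
    have hshift : ∑ j ∈ range (n + 1), n.choose j * stirling (j + 1) k =
        k * stirling (n + 1) (k + 1) + stirling (n + 1) k := by
      cases k with
      | zero => simp [stirling]
      | succ k =>
        simp only [stirling, mul_add, sum_add_distrib, mul_left_comm _ (k + 1), ← mul_sum, ← ih]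
    have hself : ∑ j ∈ range (n + 2), n.choose j * stirling j k = stirling (n + 1) (k + 1) := by
      rw [sum_range_succ, Nat.choose_succ_self, zero_mul, add_zero, ih]
    -- Pascal's rule `C(n+1, j+1) = C(n, j) + C(n, j+1)` splits the sum into `hshift` and `hself`.
    rw [sum_range_succ'] at hself
    rw [sum_range_succ', stirling]
    simp only [Nat.choose_succ_succ', add_mul, sum_add_distrib, hshift,
      Nat.choose_zero_right] at hself ⊢
    linarith

lemma bell_succ (n : ℕ) : bell (n + 1) = ∑ j ∈ range (n + 1), n.choose j * bell j :=
  calc bell (n + 1) = ∑ k ∈ range (n + 1), stirling (n + 1) (k + 1) := by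
        rw [bell, sum_range_succ', stirling, add_zero]
    _ = ∑ j ∈ range (n + 1), n.choose j * ∑ k ∈ range (n + 1), stirling j k := by
        simp only [stirling_succ_succ_eq_sum, mul_sum]
        exact sum_comm
    _ = _ := sum_congr rfl fun j hj => by rw [sum_range_stirling (by simp at hj; omega)]

lemma Nat.card_eq_sum_card_fiber {α β : Type*} [Finite α] [DecidableEq β] (f : α → β)
    {t : Finset β} (h : ∀ a, f a ∈ t) :
    Nat.card α = ∑ b ∈ t, Nat.card {a // f a = b} := by
  classical
  have := Fintype.ofFinite α
  rw [Nat.card_eq_fintype_card, ← Finset.card_univ, card_eq_sum_card_fiberwise fun a _ => h a]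
  refine sum_congr rfl fun b _ => ?_
  rw [Nat.card_eq_fintype_card, Fintype.card_subtype]

namespace Finpartition

section DistribLattice

variable {α β : Type*} [DistribLattice α] [OrderBot α] [DistribLattice β] [OrderBot β]
  [DecidableEq β] {a b : α}

def image (P : Finpartition a) (f : α → β) (hsup : ∀ x y, f (x ⊔ y) = f x ⊔ f y)
    (hinf : ∀ x y, f (x ⊓ y) = f x ⊓ f y) (hbot : f ⊥ = ⊥) : Finpartition (f a) :=
  ofErase (P.parts.image f)
    ((supIndep_iff_pairwiseDisjoint (f := id)).2 <| by
      rw [Finset.coe_image (f := f)]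
      rintro _ ⟨x, hx, rfl⟩ _ ⟨y, hy, rfl⟩ hxy
      simpa [Function.onFun] using
        P.pairwiseDisjoint_apply hinf hbot hx hy (ne_of_apply_ne f hxy))
    (by rw [sup_image, Function.id_comp, P.sup_parts_apply hsup hbot])

@[simp]
lemma mem_image_parts {P : Finpartition a} {f : α → β} {hsup hinf hbot} {q : β} :
    q ∈ (P.image f hsup hinf hbot).parts ↔ q ≠ ⊥ ∧ ∃ p ∈ P.parts, f p = q := by
  simp [image]

variable [DecidableEq α]

lemma mem_restrict_parts_of_le {P : Finpartition a} (hb : b ≤ a) {p : α} (hp : p ∈ P.parts)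
    (hpb : p ≤ b) : p ∈ (P.restrict hb).parts :=
  mem_erase.2 ⟨P.ne_bot hp, mem_image.2 ⟨p, hp, inf_eq_left.2 hpb⟩⟩

@[simps]
def disjUnion (P : Finpartition a) (Q : Finpartition b) (h : Disjoint a b) :
    Finpartition (a ⊔ b) where
  parts := P.parts ∪ Q.parts
  supIndep := by
    rw [supIndep_iff_pairwiseDisjoint, coe_union]
    exact P.disjoint.union Q.disjoint fun p hp q hq _ => h.mono (P.le hp) (Q.le hq)
  sup_parts := by rw [sup_union, P.sup_parts, Q.sup_parts]
  bot_notMem := by simp [P.bot_notMem, Q.bot_notMem]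

end DistribLattice

variable {α : Type*} [DecidableEq α] {s t : Finset α}

lemma eq_of_parts_subset {P Q : Finpartition s} (h : P.parts ⊆ Q.parts) : P = Q := by
  refine Finpartition.ext (h.antisymm fun q hq => ?_)
  obtain ⟨x, hx⟩ := Q.nonempty_of_mem_parts hq
  obtain ⟨p, hp, hxp⟩ := P.exists_mem (Q.le hq hx)
  rwa [Q.eq_of_mem_parts hq (h hp) hx hxp]

lemma mem_avoid_of_disjoint (P : Finpartition s) {p : Finset α} (hp : p ∈ P.parts)
    (hpt : Disjoint p t) : p ∈ (P.avoid t).parts :=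
  (mem_avoid P).2 ⟨p, hp, fun hle => P.ne_bot hp (hpt.eq_bot_of_le hle), hpt.sdiff_eq_left⟩

def partFiberEquiv {a : α} (ha : a ∈ s) (hat : a ∉ t) (hts : t ⊆ s) :
    {P : Finpartition s // s \ P.part a = t} ≃ Finpartition t where
  toFun P := (P.1.avoid (P.1.part a)).copy P.2
  invFun Q := ⟨Q.extend (ne_empty_of_mem (mem_sdiff.2 ⟨ha, hat⟩)) disjoint_sdiff
      (union_sdiff_of_subset hts), by
    rw [part_eq_of_mem _ (mem_insert_self _ _) (mem_sdiff.2 ⟨ha, hat⟩),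
      Finset.sdiff_sdiff_eq_self hts]⟩
  left_inv := by
    rintro ⟨P, rfl⟩
    refine Subtype.ext (eq_of_parts_subset fun p hp => ?_).symm
    simp only [extend_parts, copy_parts, Finset.sdiff_sdiff_eq_self (P.part_subset a)]
    by_cases hpa : p = P.part a
    · exact hpa ▸ mem_insert_self _ _
    · exact mem_insert_of_mem (P.mem_avoid_of_disjoint hp (P.disjoint hp (P.part_mem.2 ha) hpa))
  right_inv Q := by
    refine (eq_of_parts_subset fun q hq => ?_).symm
    simp only [copy_parts]
    rw [part_eq_of_mem _ (mem_insert_self _ _) (mem_sdiff.2 ⟨ha, hat⟩)]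
    exact mem_avoid_of_disjoint _ (mem_insert_of_mem hq)
      (disjoint_of_subset_left (Q.le hq) disjoint_sdiff)

theorem card_eq_bell (s : Finset α) : Nat.card (Finpartition s) = bell #s := by
  induction s using Finset.strongInduction with
  | H s ih =>
  rcases s.eq_empty_or_nonempty with rfl | ⟨a, ha⟩
  · exact Nat.card_unique (α := Finpartition (⊥ : Finset α))
  have hmaps (P : Finpartition s) : s \ P.part a ∈ (s.erase a).powerset :=
    mem_powerset.2 fun x hx =>
      mem_erase.2 ⟨by rintro rfl; exact (mem_sdiff.1 hx).2 (P.mem_part ha), (mem_sdiff.1 hx).1⟩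
  rw [Nat.card_eq_sum_card_fiber _ hmaps, ← card_erase_add_one ha, bell_succ]
  simp_rw [← smul_eq_mul]
  rw [← sum_powerset_apply_card bell]
  refine sum_congr rfl fun t ht => ?_
  obtain ⟨hts, hat⟩ := subset_erase.1 (mem_powerset.1 ht)
  rw [Nat.card_congr (partFiberEquiv ha hat hts),
    ih t (ssubset_iff_exists_subset_erase.2 ⟨a, ha, mem_powerset.1 ht⟩)]

section Sum

variable {β : Type*} [DecidableEq β]

def toLeft {u : Finset (α ⊕ β)} (P : Finpartition u) : Finpartition u.toLeft :=
  P.image Finset.toLeft (fun _ _ => toLeft_union) (fun _ _ => toLeft_inter) (by ext; simp)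

def toRight {u : Finset (α ⊕ β)} (P : Finpartition u) : Finpartition u.toRight :=
  P.image Finset.toRight (fun _ _ => toRight_union) (fun _ _ => toRight_inter) (by ext; simp)

def disjSum {s : Finset α} {t : Finset β} (P : Finpartition s) (Q : Finpartition t) :
    Finpartition (s.disjSum t) :=
  ((P.image (Finset.map .inl) (fun _ _ => map_union _ _) (fun _ _ => map_inter _ _)
      (map_empty _)).disjUnion
    (Q.image (Finset.map .inr) (fun _ _ => map_union _ _) (fun _ _ => map_inter _ _)
      (map_empty _))
    (disjoint_map_inl_map_inr _ _)).copy (by ext (_ | _) <;> simp)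

lemma mem_disjSum_parts {s : Finset α} {t : Finset β} {P : Finpartition s} {Q : Finpartition t}
    {p : Finset (α ⊕ β)} :
    p ∈ (P.disjSum Q).parts ↔
      (∃ q ∈ P.parts, q.map .inl = p) ∨ ∃ r ∈ Q.parts, r.map .inr = p := by
  simp only [disjSum, copy_parts, disjUnion_parts, mem_union, mem_image_parts]
  refine or_congr (and_iff_right_of_imp ?_) (and_iff_right_of_imp ?_) <;>
  · rintro ⟨q, hq, rfl⟩
    simpa using ne_bot _ hq

end Sum

end Finpartition

lemma Finset.subset_toLeft_univ {α β : Type*} [Fintype α] [Fintype β] (s : Finset α) :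
    s ⊆ (univ : Finset (α ⊕ β)).toLeft := by
  simp

lemma Finset.subset_toRight_univ {α β : Type*} [Fintype α] [Fintype β] (s : Finset β) :
    s ⊆ (univ : Finset (α ⊕ β)).toRight := by
  simp

section Crown

open Finpartition

variable {ι : Type*}

-- The independent sets of the crown graph `K_{n,n} − M` on `ι ⊕ ι`.
def IsCrownIndep (p : Finset (ι ⊕ ι)) : Prop :=
  ∀ i ∈ p.toLeft, ∀ j ∈ p.toRight, i = j

lemma IsCrownIndep.trichotomy {p : Finset (ι ⊕ ι)} (hp : IsCrownIndep p) :
    p.toRight = ∅ ∨ p.toLeft = ∅ ∨ ∃ i, p = ({i} : Finset ι).disjSum {i} := by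
  rcases p.toRight.eq_empty_or_nonempty with hr | ⟨j, hj⟩
  · exact .inl hr
  rcases p.toLeft.eq_empty_or_nonempty with hl | ⟨i, hi⟩
  · exact .inr (.inl hl)
  obtain rfl := hp i hi j hj
  exact .inr (.inr ⟨i, eq_disjSum_iff.2
    ⟨eq_singleton_iff_unique_mem.2 ⟨hi, fun k hk => hp k hk i hj⟩,
      eq_singleton_iff_unique_mem.2 ⟨hj, fun k hk => (hp i hi k hk).symm⟩⟩⟩)

variable [DecidableEq ι] [Fintype ι]

def matchingPartition (J : Finset ι) : Finpartition (Jᶜ.disjSum Jᶜ) :=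
  (⊥ : Finpartition Jᶜ).image (fun x => x.disjSum x) (fun _ _ => by ext (_ | _) <;> simp)
    (fun _ _ => by ext (_ | _) <;> simp) (by simp)

def crownPartition (J : Finset ι) (Q R : Finpartition J) :
    Finpartition (univ : Finset (ι ⊕ ι)) :=
  ((matchingPartition J).disjUnion (Q.disjSum R) (by simp [disjoint_left])).copy
    (by ext (_ | _) <;> simp [em'])

def unmatched (P : Finpartition (univ : Finset (ι ⊕ ι))) : Finset ι :=
  {i | ({i} : Finset ι).disjSum {i} ∉ P.parts}

section OfPartitions

variable {J : Finset ι} {Q R : Finpartition J} {p : Finset (ι ⊕ ι)}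

lemma mem_crownPartition_parts :
    p ∈ (crownPartition J Q R).parts ↔ (∃ i ∉ J, ({i} : Finset ι).disjSum {i} = p) ∨
      (∃ q ∈ Q.parts, q.map .inl = p) ∨ ∃ r ∈ R.parts, r.map .inr = p := by
  simp only [crownPartition, copy_parts, disjUnion_parts, mem_union, mem_disjSum_parts,
    matchingPartition, mem_image_parts, mem_bot_iff, mem_compl]
  refine or_congr_left ⟨fun ⟨_, _, ⟨i, hi, rfl⟩, h⟩ => ⟨i, hi, h⟩, ?_⟩
  rintro ⟨i, hi, rfl⟩
  exact ⟨by simp, _, ⟨i, hi, rfl⟩, rfl⟩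

lemma isCrownIndep_of_mem_crownPartition (hp : p ∈ (crownPartition J Q R).parts) :
    IsCrownIndep p := by
  rcases mem_crownPartition_parts.1 hp with ⟨i, -, rfl⟩ | ⟨q, -, rfl⟩ | ⟨r, -, rfl⟩ <;>
    intro a ha b hb <;> simp_all

lemma unmatched_crownPartition : unmatched (crownPartition J Q R) = J := by
  ext i
  simp only [unmatched, mem_filter, mem_univ, true_and, mem_crownPartition_parts,
    disjSum_inj, singleton_inj, not_or, not_exists, not_and]
  refine ⟨fun h => by_contra fun hi => h.1 i hi rfl rfl, fun hi => ⟨?_, ?_, ?_⟩⟩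
  · rintro j hj rfl
    exact (hj hi).elim
  · intro q _ h
    simpa using congrArg (Sum.inr i ∈ ·) h
  · intro r _ h
    simpa using congrArg (Sum.inl i ∈ ·) h

lemma toLeft_restrict_crownPartition :
    (crownPartition J Q R).toLeft.restrict (subset_toLeft_univ J) = Q := by
  refine (eq_of_parts_subset fun q hq => mem_restrict_parts_of_le _ ?_ (Q.le hq)).symm
  simp only [Finpartition.toLeft, mem_image_parts]
  exact ⟨Q.ne_bot hq, q.map .inl, mem_crownPartition_parts.2 (.inr (.inl ⟨q, hq, rfl⟩)),
    by ext; simp⟩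

lemma toRight_restrict_crownPartition :
    (crownPartition J Q R).toRight.restrict (subset_toRight_univ J) = R := by
  refine (eq_of_parts_subset fun r hr => mem_restrict_parts_of_le _ ?_ (R.le hr)).symm
  simp only [Finpartition.toRight, mem_image_parts]
  exact ⟨R.ne_bot hr, r.map .inr, mem_crownPartition_parts.2 (.inr (.inr ⟨r, hr, rfl⟩)),
    by ext; simp⟩

end OfPartitions

section ToPartitions

variable {P : Finpartition (univ : Finset (ι ⊕ ι))} {p : Finset (ι ⊕ ι)}

lemma toLeft_subset_unmatched (hp : p ∈ P.parts) (hr : p.toRight = ∅) :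
    p.toLeft ⊆ unmatched P := by
  intro i hi
  simp only [unmatched, mem_filter, mem_univ, true_and]
  intro hpair
  have := P.eq_of_mem_parts hp hpair (mem_toLeft.1 hi) (by simp)
  simp [this] at hr

lemma toRight_subset_unmatched (hp : p ∈ P.parts) (hl : p.toLeft = ∅) :
    p.toRight ⊆ unmatched P := by
  intro i hi
  simp only [unmatched, mem_filter, mem_univ, true_and]
  intro hpair
  have := P.eq_of_mem_parts hp hpair (mem_toRight.1 hi) (by simp)
  simp [this] at hl

lemma crownPartition_unmatched (hP : ∀ p ∈ P.parts, IsCrownIndep p) :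
    crownPartition (unmatched P) (P.toLeft.restrict (subset_toLeft_univ _))
      (P.toRight.restrict (subset_toRight_univ _)) = P := by
  refine (eq_of_parts_subset fun p hp => mem_crownPartition_parts.2 ?_).symm
  rcases (hP p hp).trichotomy with hr | hl | ⟨i, rfl⟩
  · have hpl : p.toLeft.map .inl = p := (map_inl_subset_iff_subset_toLeft.2 subset_rfl).antisymm
      (subset_map_inl.2 ⟨subset_rfl, hr⟩)
    refine .inr (.inl ⟨p.toLeft,
      mem_restrict_parts_of_le _ ?_ (toLeft_subset_unmatched hp hr), hpl⟩)
    simp only [Finpartition.toLeft, mem_image_parts]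
    exact ⟨fun h => P.ne_bot hp (by rw [← hpl, h]; simp), p, hp, rfl⟩
  · have hpr : p.toRight.map .inr = p := (map_inr_subset_iff_subset_toRight.2 subset_rfl).antisymm
      (subset_map_inr.2 ⟨hl, subset_rfl⟩)
    refine .inr (.inr ⟨p.toRight,
      mem_restrict_parts_of_le _ ?_ (toRight_subset_unmatched hp hl), hpr⟩)
    simp only [Finpartition.toRight, mem_image_parts]
    exact ⟨fun h => P.ne_bot hp (by rw [← hpr, h]; simp), p, hp, rfl⟩
  · exact .inl ⟨i, by simpa [unmatched] using hp, rfl⟩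

end ToPartitions

def crownFiberEquiv (J : Finset ι) :
    {P : {P : Finpartition (univ : Finset (ι ⊕ ι)) // ∀ p ∈ P.parts, IsCrownIndep p} //
      unmatched P.1 = J} ≃ Finpartition J × Finpartition J where
  toFun P := (P.1.1.toLeft.restrict (subset_toLeft_univ J),
    P.1.1.toRight.restrict (subset_toRight_univ J))
  invFun QR := ⟨⟨crownPartition J QR.1 QR.2, fun _ => isCrownIndep_of_mem_crownPartition⟩,
    unmatched_crownPartition⟩
  left_inv := by
    rintro ⟨⟨P, hP⟩, rfl⟩
    exact Subtype.ext (Subtype.ext (crownPartition_unmatched hP))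
  right_inv QR := Prod.ext toLeft_restrict_crownPartition toRight_restrict_crownPartition

variable (ι) in
theorem card_crownIndep_finpartition :
    Nat.card {P : Finpartition (univ : Finset (ι ⊕ ι)) // ∀ p ∈ P.parts, IsCrownIndep p} =
      ∑ k ∈ range (Fintype.card ι + 1), (Fintype.card ι).choose k * bell k ^ 2 := by
  rw [Nat.card_eq_sum_card_fiber (fun P => unmatched P.1) (t := univ) fun _ => mem_univ _]
  simp_rw [Nat.card_congr (crownFiberEquiv _), Nat.card_prod, card_eq_bell, ← sq]
  rw [← powerset_univ, sum_powerset_apply_card (fun k => bell k ^ 2), card_univ]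
  simp

end Crown

lemma forall_not_adj_iff_isCrownIndep {n : ℕ} (p : Finset (Fin n ⊕ Fin n)) :
    (∀ a ∈ p, ∀ b ∈ p, ¬ (bipartiteMinusMatching n).Adj a b) ↔ IsCrownIndep p := by
  refine ⟨fun h i hi j hj => by_contra fun hij => ?_, ?_⟩
  · exact h _ (mem_toLeft.1 hi) _ (mem_toRight.1 hj) (by simpa [bipartiteMinusMatching] using hij)
  · rintro h (a | a) ha (b | b) hb <;> simp [bipartiteMinusMatching]
    · exact h a (mem_toLeft.2 ha) b (mem_toRight.2 hb)
    · exact h b (mem_toLeft.2 hb) a (mem_toRight.2 ha)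

/-- The total number of proper partitions of `H = K_{n,n} − M` into independent sets equals
`∑_{k=0}^{n} C(n,k)·B(k)²`. -/
theorem bell_bipartiteMinusMatching (n : ℕ) :
    Nat.card {P : Finpartition (Finset.univ : Finset (Fin n ⊕ Fin n)) //
        ∀ p ∈ P.parts, ∀ a ∈ p, ∀ b ∈ p, ¬ (bipartiteMinusMatching n).Adj a b} =
      ∑ k ∈ Finset.range (n + 1), n.choose k * bell k ^ 2 := by
  simp_rw [forall_not_adj_iff_isCrownIndep]
  rw [card_crownIndep_finpartition, Fintype.card_fin]
end
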